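/- Under the leafwise transfer-operator formula (F_* μ)|_γ = Σ_{i=1}^{d} F_{γᵢ*}(μ|_{γᵢ}) ρ(γᵢ) with weights ρ(γᵢ) ≥ 0 summing to 1, and with each fiber map F_γ : K → K an α-contraction on a compact space K of diameter ≤ 1, every μ ∈ L^∞ satisfies ‖F_* μ‖_∞ ≤ α^ζ ‖μ‖_∞ + |φ_x|_∞, where φ_x is the marginal density of μ and |φ_x(γ)| = |μ|_γ(K)| ≤ ‖μ|_γ‖_W. -/

import Mathlib

open MeasureTheory

/-- The Wasserstein–Kantorovich-like norm `‖μ‖_W` of a signed measure on `K`. -/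
noncomputable def Wnorm {K : Type*} [MetricSpace K] [MeasurableSpace K] (ζ : ℝ)
    (μ : SignedMeasure K) : ℝ :=
  sSup { r : ℝ | ∃ g : K → ℝ, (∀ x, |g x| ≤ 1) ∧
    (∀ x y, |g x - g y| ≤ dist x y ^ ζ) ∧
    r = |(∫ x, g x ∂μ.toJordanDecomposition.posPart) -
          ∫ x, g x ∂μ.toJordanDecomposition.negPart| }

section Aux

variable {K : Type*} [MetricSpace K] [MeasurableSpace K] [BorelSpace K]

/-- The admissible set of values appearing in the definition of `Wnorm`. -/
def Wset (ζ : ℝ) (μ : SignedMeasure K) : Set ℝ :=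
  { r : ℝ | ∃ g : K → ℝ, (∀ x, |g x| ≤ 1) ∧
    (∀ x y, |g x - g y| ≤ dist x y ^ ζ) ∧
    r = |(∫ x, g x ∂μ.toJordanDecomposition.posPart) -
          ∫ x, g x ∂μ.toJordanDecomposition.negPart| }

lemma Wnorm_eq (ζ : ℝ) (μ : SignedMeasure K) : Wnorm ζ μ = sSup (Wset ζ μ) := rfl

lemma aux_holder_continuous {ζ : ℝ} (hζ : 0 < ζ) {g : K → ℝ}
    (hg : ∀ x y, |g x - g y| ≤ dist x y ^ ζ) : Continuous g := by
  rw [Metric.continuous_iff]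
  intro b ε hε
  refine ⟨ε ^ ζ⁻¹, Real.rpow_pos_of_pos hε _, fun a hab => ?_⟩
  rw [Real.dist_eq]
  calc |g a - g b| ≤ dist a b ^ ζ := hg a b
    _ < (ε ^ ζ⁻¹) ^ ζ := Real.rpow_lt_rpow dist_nonneg hab hζ
    _ = ε := Real.rpow_inv_rpow hε.le hζ.ne'

lemma aux_integrable {g : K → ℝ} (hgm : Measurable g) (hb : ∀ x, |g x| ≤ 1)
    (p : Measure K) [IsFiniteMeasure p] : Integrable g p :=
  Integrable.mono' (integrable_const 1) hgm.aestronglyMeasurable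
    (Filter.Eventually.of_forall fun x => by simpa using hb x)

lemma aux_jordan_apply (μ : SignedMeasure K) {s : Set K} (hs : MeasurableSet s) :
    μ s = (μ.toJordanDecomposition.posPart s).toReal -
      (μ.toJordanDecomposition.negPart s).toReal := by
  conv_lhs => rw [← μ.toSignedMeasure_toJordanDecomposition]
  rw [JordanDecomposition.toSignedMeasure, Measure.toSignedMeasure_sub_apply hs]
  rfl

lemma aux_integral_jordan (μ : SignedMeasure K) (p n : Measure K)
    [IsFiniteMeasure p] [IsFiniteMeasure n]
    (h : ∀ s : Set K, MeasurableSet s → μ s = (p s).toReal - (n s).toReal)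
    {g : K → ℝ} (hgm : Measurable g) (hb : ∀ x, |g x| ≤ 1) :
    (∫ x, g x ∂μ.toJordanDecomposition.posPart) - ∫ x, g x ∂μ.toJordanDecomposition.negPart
      = (∫ x, g x ∂p) - ∫ x, g x ∂n := by
  have key : μ.toJordanDecomposition.posPart + n = p + μ.toJordanDecomposition.negPart := by
    ext s hs
    have h1 := aux_jordan_apply μ hs
    have h2 := h s hs
    rw [Measure.add_apply, Measure.add_apply]
    have e1 : (μ.toJordanDecomposition.posPart s + n s).toReal
        = (p s + μ.toJordanDecomposition.negPart s).toReal := by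
      rw [ENNReal.toReal_add (measure_ne_top _ _) (measure_ne_top _ _),
        ENNReal.toReal_add (measure_ne_top _ _) (measure_ne_top _ _)]
      linarith
    exact (ENNReal.toReal_eq_toReal_iff'
      (ENNReal.add_ne_top.mpr ⟨measure_ne_top _ _, measure_ne_top _ _⟩)
      (ENNReal.add_ne_top.mpr ⟨measure_ne_top _ _, measure_ne_top _ _⟩)).mp e1
  have h3 : (∫ x, g x ∂μ.toJordanDecomposition.posPart) + ∫ x, g x ∂n
      = (∫ x, g x ∂p) + ∫ x, g x ∂μ.toJordanDecomposition.negPart := by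
    rw [← integral_add_measure (aux_integrable hgm hb _) (aux_integrable hgm hb _),
      ← integral_add_measure (aux_integrable hgm hb _) (aux_integrable hgm hb _), key]
  linarith

lemma aux_zero_mem (ζ : ℝ) (μ : SignedMeasure K) : (0 : ℝ) ∈ Wset ζ μ := by
  refine ⟨fun _ => 0, by simp, fun x y => by simpa using Real.rpow_nonneg dist_nonneg ζ, by simp⟩

lemma aux_bddAbove (ζ : ℝ) (μ : SignedMeasure K) : BddAbove (Wset ζ μ) := by
  refine ⟨(μ.toJordanDecomposition.posPart Set.univ).toReal +
    (μ.toJordanDecomposition.negPart Set.univ).toReal, ?_⟩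
  rintro r ⟨g, hb, hh, rfl⟩
  have hp : ∀ (q : Measure K) [IsFiniteMeasure q], |∫ x, g x ∂q| ≤ (q Set.univ).toReal := by
    intro q _
    have := norm_integral_le_of_norm_le_const (μ := q) (f := g) (C := 1)
      (Filter.Eventually.of_forall fun x => by simpa using hb x)
    simpa [Measure.real] using this
  calc |(∫ x, g x ∂μ.toJordanDecomposition.posPart) -
        ∫ x, g x ∂μ.toJordanDecomposition.negPart|
      ≤ |∫ x, g x ∂μ.toJordanDecomposition.posPart| +
        |∫ x, g x ∂μ.toJordanDecomposition.negPart| := abs_sub _ _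
    _ ≤ _ := add_le_add (hp _) (hp _)

lemma aux_le_Wnorm {ζ : ℝ} {μ : SignedMeasure K} {r : ℝ} (hr : r ∈ Wset ζ μ) :
    r ≤ Wnorm ζ μ := le_csSup (aux_bddAbove ζ μ) hr

lemma aux_Wnorm_nonneg (ζ : ℝ) (μ : SignedMeasure K) : 0 ≤ Wnorm ζ μ :=
  aux_le_Wnorm (aux_zero_mem ζ μ)

lemma aux_Wnorm_le {ζ : ℝ} {μ : SignedMeasure K} {c : ℝ} (h : ∀ r ∈ Wset ζ μ, r ≤ c) :
    Wnorm ζ μ ≤ c := csSup_le ⟨0, aux_zero_mem ζ μ⟩ h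

lemma aux_map_bound [CompactSpace K] (hdiam : Metric.diam (Set.univ : Set K) ≤ 1)
    {ζ α : ℝ} (hζ0 : 0 < ζ) (hα0 : 0 < α)
    {G : K → K} (hGm : Measurable G) (hGc : ∀ z₁ z₂, dist (G z₁) (G z₂) ≤ α * dist z₁ z₂)
    (ν : SignedMeasure K)
    {g : K → ℝ} (hb : ∀ x, |g x| ≤ 1) (hh : ∀ x y, |g x - g y| ≤ dist x y ^ ζ) :
    |(∫ x, g (G x) ∂ν.toJordanDecomposition.posPart) -
      ∫ x, g (G x) ∂ν.toJordanDecomposition.negPart|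
      ≤ α ^ ζ * Wnorm ζ ν + |ν Set.univ| := by
  have hA0 : (0 : ℝ) < α ^ ζ := Real.rpow_pos_of_pos hα0 ζ
  have hW0 := aux_Wnorm_nonneg ζ ν
  rcases isEmpty_or_nonempty K with hK | hK
  · have hz : ∀ q : Measure K, q = 0 := fun q => q.eq_zero_of_isEmpty
    rw [hz ν.toJordanDecomposition.posPart, hz ν.toJordanDecomposition.negPart]
    simp only [integral_zero_measure, sub_zero, abs_zero]
    have : (0:ℝ) ≤ α ^ ζ * Wnorm ζ ν := mul_nonneg hA0.le hW0
    have := abs_nonneg (ν Set.univ)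
    linarith
  · obtain ⟨x₀⟩ := hK
    set c₀ := g (G x₀) with hc₀def
    have hgm : Measurable g := (aux_holder_continuous hζ0 hh).measurable
    have hcomp : ∀ x y : K, |g (G x) - g (G y)| ≤ α ^ ζ * dist x y ^ ζ := by
      intro x y
      calc |g (G x) - g (G y)| ≤ dist (G x) (G y) ^ ζ := hh _ _
        _ ≤ (α * dist x y) ^ ζ := Real.rpow_le_rpow dist_nonneg (hGc x y) hζ0.le
        _ = α ^ ζ * dist x y ^ ζ := Real.mul_rpow hα0.le dist_nonneg
    have hd1 : ∀ x : K, dist x x₀ ^ ζ ≤ 1 := fun x =>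
      Real.rpow_le_one dist_nonneg
        (le_trans (Metric.dist_le_diam_of_mem isCompact_univ.isBounded
          (Set.mem_univ x) (Set.mem_univ x₀)) hdiam) hζ0.le
    set g' : K → ℝ := fun x => (g (G x) - c₀) / α ^ ζ with hg'def
    have hg'b : ∀ x, |g' x| ≤ 1 := by
      intro x
      have : g' x = (g (G x) - c₀) / α ^ ζ := rfl
      rw [this, abs_div, abs_of_pos hA0, div_le_one hA0]
      calc |g (G x) - c₀| ≤ α ^ ζ * dist x x₀ ^ ζ := hcomp x x₀
        _ ≤ α ^ ζ * 1 := by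
            have := hd1 x
            nlinarith
        _ = α ^ ζ := mul_one _
    have hg'h : ∀ x y, |g' x - g' y| ≤ dist x y ^ ζ := by
      intro x y
      have e : g' x - g' y = (g (G x) - g (G y)) / α ^ ζ := by
        simp only [hg'def]
        ring
      rw [e, abs_div, abs_of_pos hA0, div_le_iff₀ hA0]
      calc |g (G x) - g (G y)| ≤ α ^ ζ * dist x y ^ ζ := hcomp x y
        _ = dist x y ^ ζ * α ^ ζ := mul_comm _ _
    have hr' : |(∫ x, g' x ∂ν.toJordanDecomposition.posPart) -
        ∫ x, g' x ∂ν.toJordanDecomposition.negPart| ≤ Wnorm ζ ν :=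
      aux_le_Wnorm ⟨g', hg'b, hg'h, rfl⟩
    have hg'm : Measurable g' := ((hgm.comp hGm).sub measurable_const).div_const _
    have hrel : ∀ x, g (G x) = α ^ ζ * g' x + c₀ := by
      intro x
      simp only [hg'def]
      field_simp
      ring
    have hint : ∀ (q : Measure K) [IsFiniteMeasure q],
        (∫ x, g (G x) ∂q) = α ^ ζ * (∫ x, g' x ∂q) + c₀ * (q Set.univ).toReal := by
      intro q _
      calc (∫ x, g (G x) ∂q) = ∫ x, (α ^ ζ * g' x + c₀) ∂q := by simp only [hrel]
        _ = (∫ x, α ^ ζ * g' x ∂q) + ∫ _, c₀ ∂q :=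
            integral_add ((aux_integrable hg'm hg'b q).const_mul _) (integrable_const _)
        _ = α ^ ζ * (∫ x, g' x ∂q) + c₀ * (q Set.univ).toReal := by
            rw [integral_const, integral_const_mul, smul_eq_mul]
            simp only [Measure.real]
            ring
    rw [hint _, hint _]
    have hν := aux_jordan_apply ν MeasurableSet.univ
    have hc₀ : |c₀| ≤ 1 := hb _
    set P := ∫ x, g' x ∂ν.toJordanDecomposition.posPart
    set N := ∫ x, g' x ∂ν.toJordanDecomposition.negPart
    have e2 : α ^ ζ * P + c₀ * (ν.toJordanDecomposition.posPart Set.univ).toReal -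
        (α ^ ζ * N + c₀ * (ν.toJordanDecomposition.negPart Set.univ).toReal)
        = α ^ ζ * (P - N) + c₀ * (ν Set.univ) := by
      rw [hν]; ring
    rw [e2]
    calc |α ^ ζ * (P - N) + c₀ * (ν Set.univ)|
        ≤ |α ^ ζ * (P - N)| + |c₀ * (ν Set.univ)| := abs_add_le _ _
      _ = α ^ ζ * |P - N| + |c₀| * |ν Set.univ| := by
          rw [abs_mul, abs_mul, abs_of_pos hA0]
      _ ≤ α ^ ζ * Wnorm ζ ν + 1 * |ν Set.univ| :=
          add_le_add (mul_le_mul_of_nonneg_left hr' hA0.le)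
            (mul_le_mul_of_nonneg_right hc₀ (abs_nonneg _))
      _ = α ^ ζ * Wnorm ζ ν + |ν Set.univ| := by ring

lemma aux_vm_sum_apply {ι : Type*} {α M : Type*} [MeasurableSpace α] [AddCommMonoid M]
    [TopologicalSpace M] [ContinuousAdd M]
    (s : Finset ι) (v : ι → VectorMeasure α M) (t : Set α) :
    (∑ i ∈ s, v i) t = ∑ i ∈ s, v i t := by
  let φ : VectorMeasure α M →+ M :=
    { toFun := fun w => w t, map_zero' := rfl, map_add' := fun _ _ => rfl }
  exact map_sum φ v s

lemma aux_key [CompactSpace K] (hdiam : Metric.diam (Set.univ : Set K) ≤ 1)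
    {ζ α : ℝ} (hζ0 : 0 < ζ) (hα0 : 0 < α) {d : ℕ}
    (c : Fin d → ℝ) (hc0 : ∀ i, 0 ≤ c i)
    (G : Fin d → K → K) (hGm : ∀ i, Measurable (G i))
    (hGc : ∀ i z₁ z₂, dist (G i z₁) (G i z₂) ≤ α * dist z₁ z₂)
    (ν : Fin d → SignedMeasure K) :
    Wnorm ζ (∑ i, c i • (ν i).map (G i)) ≤
      ∑ i, c i * (α ^ ζ * Wnorm ζ (ν i) + |ν i Set.univ|) := by
  set μ := ∑ i, c i • (ν i).map (G i) with hμdef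
  set p : Measure K :=
    ∑ i, ENNReal.ofReal (c i) • ((ν i).toJordanDecomposition.posPart.map (G i)) with hpdef
  set n : Measure K :=
    ∑ i, ENNReal.ofReal (c i) • ((ν i).toJordanDecomposition.negPart.map (G i)) with hndef
  haveI hpf : IsFiniteMeasure p := by
    constructor
    rw [hpdef, Measure.finset_sum_apply]
    refine ENNReal.sum_lt_top.mpr fun i _ => ?_
    rw [Measure.smul_apply, smul_eq_mul]
    exact ENNReal.mul_lt_top ENNReal.ofReal_lt_top (measure_lt_top _ _)
  haveI hnf : IsFiniteMeasure n := by
    constructor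
    rw [hndef, Measure.finset_sum_apply]
    refine ENNReal.sum_lt_top.mpr fun i _ => ?_
    rw [Measure.smul_apply, smul_eq_mul]
    exact ENNReal.mul_lt_top ENNReal.ofReal_lt_top (measure_lt_top _ _)
  have hform : ∀ s : Set K, MeasurableSet s → μ s = (p s).toReal - (n s).toReal := by
    intro s hs
    have hμs : μ s = ∑ i, c i * ((ν i (G i ⁻¹' s))) := by
      rw [hμdef, aux_vm_sum_apply]
      refine Finset.sum_congr rfl fun i _ => ?_
      rw [VectorMeasure.smul_apply, VectorMeasure.map_apply _ (hGm i) hs, smul_eq_mul]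
    have hps : (p s).toReal = ∑ i, c i * ((ν i).toJordanDecomposition.posPart
        (G i ⁻¹' s)).toReal := by
      rw [hpdef, Measure.finset_sum_apply,
        ENNReal.toReal_sum (fun i _ => by
          rw [Measure.smul_apply, smul_eq_mul]
          exact ENNReal.mul_ne_top ENNReal.ofReal_ne_top
            ((measure_lt_top _ _).ne))]
      refine Finset.sum_congr rfl fun i _ => ?_
      rw [Measure.smul_apply, smul_eq_mul, ENNReal.toReal_mul,
        ENNReal.toReal_ofReal (hc0 i), Measure.map_apply (hGm i) hs]
    have hns : (n s).toReal = ∑ i, c i * ((ν i).toJordanDecomposition.negPart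
        (G i ⁻¹' s)).toReal := by
      rw [hndef, Measure.finset_sum_apply,
        ENNReal.toReal_sum (fun i _ => by
          rw [Measure.smul_apply, smul_eq_mul]
          exact ENNReal.mul_ne_top ENNReal.ofReal_ne_top
            ((measure_lt_top _ _).ne))]
      refine Finset.sum_congr rfl fun i _ => ?_
      rw [Measure.smul_apply, smul_eq_mul, ENNReal.toReal_mul,
        ENNReal.toReal_ofReal (hc0 i), Measure.map_apply (hGm i) hs]
    rw [hμs, hps, hns, ← Finset.sum_sub_distrib]
    refine Finset.sum_congr rfl fun i _ => ?_
    rw [← mul_sub, ← aux_jordan_apply (ν i) (hGm i hs)]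
  refine aux_Wnorm_le ?_
  rintro r ⟨g, hb, hh, rfl⟩
  have hgm : Measurable g := (aux_holder_continuous hζ0 hh).measurable
  rw [aux_integral_jordan μ p n hform hgm hb]
  have hip : (∫ x, g x ∂p)
      = ∑ i, c i * ∫ x, g (G i x) ∂(ν i).toJordanDecomposition.posPart := by
    rw [hpdef, integral_finset_sum_measure (fun i _ =>
      (aux_integrable hgm hb _).smul_measure ENNReal.ofReal_ne_top)]
    refine Finset.sum_congr rfl fun i _ => ?_
    rw [integral_smul_measure, ENNReal.toReal_ofReal (hc0 i), smul_eq_mul,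
      integral_map (hGm i).aemeasurable hgm.aestronglyMeasurable]
  have hin : (∫ x, g x ∂n)
      = ∑ i, c i * ∫ x, g (G i x) ∂(ν i).toJordanDecomposition.negPart := by
    rw [hndef, integral_finset_sum_measure (fun i _ =>
      (aux_integrable hgm hb _).smul_measure ENNReal.ofReal_ne_top)]
    refine Finset.sum_congr rfl fun i _ => ?_
    rw [integral_smul_measure, ENNReal.toReal_ofReal (hc0 i), smul_eq_mul,
      integral_map (hGm i).aemeasurable hgm.aestronglyMeasurable]
  rw [hip, hin, ← Finset.sum_sub_distrib]
  refine le_trans (Finset.abs_sum_le_sum_abs _ _) (Finset.sum_le_sum fun i _ => ?_)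
  rw [← mul_sub, abs_mul, abs_of_nonneg (hc0 i)]
  exact mul_le_mul_of_nonneg_left
    (aux_map_bound hdiam hζ0 hα0 (hGm i) (hGc i) (ν i) hb hh) (hc0 i)

lemma aux_ae_comp {M : Type*} [MeasurableSpace M] (m₁ : Measure M) {f : M → M}
    (hf : Measurable f) (habs : m₁.map f ≪ m₁) {P : M → Prop}
    (h : ∀ᵐ x ∂m₁, P x) : ∀ᵐ γ ∂m₁, P (f γ) := by
  rw [Filter.eventually_iff, mem_ae_iff] at h ⊢
  obtain ⟨t, hsub, htm, ht0⟩ := exists_measurable_superset_of_null h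
  have h2 : m₁.map f t = 0 := habs ht0
  rw [Measure.map_apply hf htm] at h2
  have hsub2 : {γ | P (f γ)}ᶜ ⊆ f ⁻¹' t := fun x hx => hsub hx
  exact measure_mono_null hsub2 h2

end Aux

/-- Proposition 5.6: under the leafwise transfer-operator formula
`(F_* μ)|_γ = Σᵢ ρᵢ(γᵢ) • F_{γᵢ*}(μ|_{γᵢ})` with nonnegative weights summing to `1`, fiber
maps which are `α`-contractions of a compact space `K` of diameter ≤ 1, one has
`‖F_* μ‖_∞ ≤ α^ζ ‖μ‖_∞ + |φ_x|_∞`, where `φ_x(γ) = μ|_γ(K)` is the marginal density. -/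
theorem stmt14 {M K : Type*} [MeasurableSpace M]
    [MetricSpace K] [CompactSpace K] [MeasurableSpace K] [BorelSpace K]
    (hdiam : Metric.diam (Set.univ : Set K) ≤ 1)
    (m₁ : Measure M) [IsProbabilityMeasure m₁]
    (ζ α : ℝ) (hζ0 : 0 < ζ) (hζ1 : ζ ≤ 1) (hα0 : 0 < α) (hα1 : α < 1)
    (d : ℕ) (hd : 0 < d)
    (ρ : Fin d → M → ℝ) (hρ0 : ∀ i γ, 0 ≤ ρ i γ) (hρ1 : ∀ γ, ∑ i, ρ i γ = 1)
    (branch : Fin d → M → M) (hbm : ∀ i, Measurable (branch i))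
    (habs : ∀ i, m₁.map (branch i) ≪ m₁)
    (Gmap : Fin d → M → K → K) (hGm : ∀ i γ, Measurable (Gmap i γ))
    (hGc : ∀ i γ z₁ z₂, dist (Gmap i γ z₁) (Gmap i γ z₂) ≤ α * dist z₁ z₂)
    (μleaf Fμleaf : M → SignedMeasure K)
    (hformula : ∀ᵐ γ ∂m₁,
      Fμleaf γ = ∑ i, ρ i γ • (μleaf (branch i γ)).map (Gmap i γ)) :
    essSup (fun γ => ENNReal.ofReal (Wnorm ζ (Fμleaf γ))) m₁ ≤
      ENNReal.ofReal (α ^ ζ) * essSup (fun γ => ENNReal.ofReal (Wnorm ζ (μleaf γ))) m₁ +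
        essSup (fun γ => ENNReal.ofReal |μleaf γ Set.univ|) m₁ := by
  classical
  set A := essSup (fun γ => ENNReal.ofReal (Wnorm ζ (μleaf γ))) m₁ with hA
  set B := essSup (fun γ => ENNReal.ofReal |μleaf γ Set.univ|) m₁ with hB
  have hαζ : (0:ℝ) < α ^ ζ := Real.rpow_pos_of_pos hα0 ζ
  by_cases hAt : A = ⊤
  · rw [hAt, ENNReal.mul_top (by simp [ENNReal.ofReal_eq_zero]; linarith)]
    simp
  by_cases hBt : B = ⊤
  · rw [hBt, add_top]
    exact le_top
  have h1 : ∀ᵐ γ ∂m₁, Wnorm ζ (μleaf γ) ≤ A.toReal :=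
    (ENNReal.ae_le_essSup _).mono fun γ h => (ENNReal.ofReal_le_iff_le_toReal hAt).mp h
  have h2 : ∀ᵐ γ ∂m₁, |μleaf γ Set.univ| ≤ B.toReal :=
    (ENNReal.ae_le_essSup _).mono fun γ h => (ENNReal.ofReal_le_iff_le_toReal hBt).mp h
  have h4 : ∀ᵐ γ ∂m₁, ∀ i : Fin d,
      Wnorm ζ (μleaf (branch i γ)) ≤ A.toReal ∧
        |μleaf (branch i γ) Set.univ| ≤ B.toReal :=
    ae_all_iff.mpr fun i => aux_ae_comp m₁ (hbm i) (habs i) (h1.and h2)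
  have hmain : ∀ᵐ γ ∂m₁, ENNReal.ofReal (Wnorm ζ (Fμleaf γ)) ≤
      ENNReal.ofReal (α ^ ζ * A.toReal + B.toReal) := by
    filter_upwards [hformula, h4] with γ hf h4γ
    apply ENNReal.ofReal_le_ofReal
    calc Wnorm ζ (Fμleaf γ)
        = Wnorm ζ (∑ i, ρ i γ • (μleaf (branch i γ)).map (Gmap i γ)) := by rw [hf]
      _ ≤ ∑ i, ρ i γ * (α ^ ζ * Wnorm ζ (μleaf (branch i γ)) +
            |μleaf (branch i γ) Set.univ|) :=
          aux_key hdiam hζ0 hα0 (fun i => ρ i γ) (fun i => hρ0 i γ)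
            (fun i => Gmap i γ) (fun i => hGm i γ) (fun i => hGc i γ)
            (fun i => μleaf (branch i γ))
      _ ≤ ∑ i, ρ i γ * (α ^ ζ * A.toReal + B.toReal) :=
          Finset.sum_le_sum fun i _ => mul_le_mul_of_nonneg_left
            (add_le_add (mul_le_mul_of_nonneg_left (h4γ i).1 hαζ.le) (h4γ i).2)
            (hρ0 i γ)
      _ = α ^ ζ * A.toReal + B.toReal := by rw [← Finset.sum_mul, hρ1 γ, one_mul]
  have hfinal : ENNReal.ofReal (α ^ ζ * A.toReal + B.toReal)
      = ENNReal.ofReal (α ^ ζ) * A + B := by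
    rw [ENNReal.ofReal_add (mul_nonneg hαζ.le ENNReal.toReal_nonneg) ENNReal.toReal_nonneg,
      ENNReal.ofReal_mul hαζ.le, ENNReal.ofReal_toReal hAt, ENNReal.ofReal_toReal hBt]
  exact le_trans (essSup_le_of_ae_le _ hmain) (le_of_eq hfinal)
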